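/- arXiv:2007.12513 — 3 statements merged into one kernel-verified Lean document; each statement's English description precedes it below -/
import Mathlib

section
/- If a_1 < a_2 < ... < a_k are integers such that all differences a_j - a_i for 1 ≤ i < j ≤ k are pairwise distinct, and G is the graph on vertices v_0, v_1, ..., v_{n-1} consisting of the Hamilton cycle v_0 v_1 ... v_{n-1} v_0 together with the chords v_0 v_{a_i} for 1 < i < k (where a_1 = 1 and a_k = n-1), then no two cycles of G have the same length. -/
/-!
Deleting `v_0` from `G` leaves the path `v_1 ⋯ v_{n-1}`, which is acyclic, so every cycle passes
through `v_0`. Rotated to start there, a cycle leaves `v_0` along an edge `v_0 v_b` and returns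
along `v_0 v_c` with `b < c` (both chords, as `a_1 = 1` and `a_k = n - 1`), and in between it is a
path in `v_1 ⋯ v_{n-1}`, i.e. the segment `v_b ⋯ v_c`. So the cycle has `c - b + 2` edges and is
determined by `{b, c}`; the Sidon property of the `a_i` recovers `{b, c}` from that length.
-/

/-- A finset of edges forms a cycle of the graph `G` if it is the edge set of some
cycle walk in `G`. -/
def IsCycleSet {V : Type*} [DecidableEq V] (G : SimpleGraph V) (s : Finset (Sym2 V)) : Prop :=
  ∃ (u : V) (w : G.Walk u u), w.IsCycle ∧ w.edges.toFinset = s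

open SimpleGraph Finset

namespace Fin

variable {n : ℕ} [NeZero n]

lemma add_one_eq_zero_iff {u : Fin n} : u + 1 = 0 ↔ u.val + 1 = n := by
  rw [Fin.ext_iff, Fin.val_add, Fin.val_one', Nat.add_mod_mod, Fin.val_zero]
  rcases Nat.lt_or_ge (u.val + 1) n with h | h
  · rw [Nat.mod_eq_of_lt h]; omega
  · have : u.val + 1 = n := by omega
    rw [this, Nat.mod_self]; simp

lemma val_add_one_of_add_one_ne_zero {u : Fin n} (h : u + 1 ≠ 0) : (u + 1).val = u.val + 1 :=
  val_add_one_of_lt' (by have := u.isLt; rw [Ne, add_one_eq_zero_iff] at h; omega)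

lemma add_one_eq_of_val_add_one_eq {u v : Fin n} (h : u.val + 1 = v.val) : u + 1 = v :=
  Fin.ext ((val_add_one_of_lt' (h ▸ v.isLt)).trans h)

end Fin

section PathGraph

variable {n : ℕ}

-- `v + 1` is taken in `Fin n`, but for `v < hi` it does not wrap around: its value is `v + 1`.
def pathSegment [NeZero n] (lo hi : Fin n) : Finset (Sym2 (Fin n)) :=
  (Ico lo hi).image fun v => s(v, v + 1)

lemma pathSegment_eq_insert_left [NeZero n] {lo mid hi : Fin n} (h : lo.val + 1 = mid.val)
    (hle : mid ≤ hi) : pathSegment lo hi = insert s(lo, mid) (pathSegment mid hi) := by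
  have hIco : Ico lo hi = insert lo (Ico mid hi) := by
    ext v
    simp only [mem_insert, mem_Ico, Fin.le_def, Fin.lt_def, Fin.ext_iff] at hle ⊢
    omega
  rw [pathSegment, hIco, image_insert, Fin.add_one_eq_of_val_add_one_eq h, pathSegment]

lemma pathSegment_eq_insert_right [NeZero n] {lo mid hi : Fin n} (h : mid.val + 1 = hi.val)
    (hle : lo ≤ mid) : pathSegment lo hi = insert s(mid, hi) (pathSegment lo mid) := by
  have hIco : Ico lo hi = insert mid (Ico lo mid) := by
    ext v
    simp only [mem_insert, mem_Ico, Fin.le_def, Fin.lt_def, Fin.ext_iff] at hle ⊢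
    omega
  rw [pathSegment, hIco, image_insert, Fin.add_one_eq_of_val_add_one_eq h, pathSegment]

lemma card_pathSegment [NeZero n] (lo hi : Fin n) : #(pathSegment lo hi) = hi - lo := by
  rw [pathSegment, card_image_of_injOn, Fin.card_Ico]
  intro v hv w hw hvw
  simp only [coe_Ico, Set.mem_Ico, Fin.lt_def] at hv hw
  rw [Sym2.eq_iff] at hvw
  rcases hvw with ⟨hvw, -⟩ | ⟨hv1, hw1⟩
  · exact hvw
  · have hv' := congrArg Fin.val hv1
    have hw' := congrArg Fin.val hw1
    rw [Fin.val_add_one_of_lt' (by omega)] at hv' hw'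
    omega

lemma zero_notMem_of_mem_pathSegment [NeZero n] {lo hi : Fin n} {e : Sym2 (Fin n)} (hlo : lo ≠ 0)
    (he : e ∈ pathSegment lo hi) : (0 : Fin n) ∉ e := by
  obtain ⟨v, hv, rfl⟩ := mem_image.mp he
  rw [mem_Ico] at hv
  rw [Sym2.mem_iff, not_or]
  refine ⟨fun h => hlo (le_antisymm (h ▸ hv.1) (Fin.zero_le _)), fun h => ?_⟩
  have := congrArg Fin.val h
  have hv1 : v.val + 1 < n := by have := hi.isLt; rw [Fin.lt_def] at hv; omega
  rw [Fin.val_zero, Fin.val_add_one_of_lt' hv1] at this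
  omega

lemma pathGraph_lt_iff_of_notMem_support {x y b v : Fin n} (p : (pathGraph n).Walk x y)
    (hb : b ∉ p.support) (hv : v ∈ p.support) : b < v ↔ b < x := by
  induction p with
  | nil => rw [Walk.support_nil, List.mem_singleton] at hv; rw [hv]
  | @cons x x' y h p ih =>
    rw [Walk.support_cons, List.mem_cons, not_or] at hb
    rw [Walk.support_cons, List.mem_cons] at hv
    rcases hv with rfl | hv
    · rfl
    rw [ih hb.2 hv]
    have hbx' : b ≠ x' := fun e => hb.2 (e ▸ p.start_mem_support)
    have := pathGraph_adj.mp h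
    simp only [Fin.lt_def, ne_eq, Fin.ext_iff] at hb hbx' ⊢
    omega

lemma pathGraph_edges_toFinset_of_isPath [NeZero n] {x y : Fin n} {p : (pathGraph n).Walk x y}
    (hp : p.IsPath) : p.edges.toFinset = pathSegment (x ⊓ y) (x ⊔ y) := by
  induction p with
  | nil => simp [pathSegment]
  | @cons x x' y h p ih =>
    rw [Walk.cons_isPath_iff] at hp
    have hside := fun v (hv : v ∈ p.support) => pathGraph_lt_iff_of_notMem_support p hp.2 hv
    have hy := hside y p.end_mem_support
    have hx' := hside x' p.start_mem_support
    rw [Walk.edges_cons, List.toFinset_cons, ih hp.1]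
    have hne : y ≠ x := fun e => hp.2 (e ▸ p.end_mem_support)
    rcases pathGraph_adj.mp h with hup | hdown
    · have hxy : x < y := hy.mpr (hx'.mp (Fin.lt_def.mpr (by omega)))
      have hx'y : x' ≤ y := by rw [Fin.lt_def] at hxy; rw [Fin.le_def]; omega
      rw [inf_eq_left.mpr hx'y, sup_eq_right.mpr hx'y, inf_eq_left.mpr hxy.le,
        sup_eq_right.mpr hxy.le, pathSegment_eq_insert_left hup hx'y]
    · have hyx : y < x := (not_lt.mp fun hxy => by
        have := hy.mp hxy; rw [Fin.lt_def] at this; omega).lt_of_ne hne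
      have hyx' : y ≤ x' := by rw [Fin.lt_def] at hyx; rw [Fin.le_def]; omega
      rw [inf_eq_right.mpr hyx', sup_eq_left.mpr hyx', inf_eq_right.mpr hyx.le,
        sup_eq_left.mpr hyx.le, pathSegment_eq_insert_right hdown hyx', Sym2.eq_swap]

lemma pathGraph_isAcyclic (n : ℕ) : (pathGraph n).IsAcyclic := by
  rintro v (_ | @⟨_, x, _, h, p⟩) hc
  · exact hc.not_nil Walk.Nil.nil
  have := v.neZero
  rw [Walk.cons_isCycle_iff] at hc
  apply hc.2
  rw [← List.mem_toFinset, pathGraph_edges_toFinset_of_isPath hc.1]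
  rcases pathGraph_adj.mp h with hup | hdown
  · have hvx : v ≤ x := Fin.le_def.mpr (by omega)
    rw [inf_eq_right.mpr hvx, sup_eq_left.mpr hvx, pathSegment_eq_insert_left hup le_rfl]
    exact mem_insert_self _ _
  · have hxv : x ≤ v := Fin.le_def.mpr (by omega)
    rw [inf_eq_left.mpr hxv, sup_eq_right.mpr hxv, pathSegment_eq_insert_right hdown le_rfl,
      Sym2.eq_swap]
    exact mem_insert_self _ _

end PathGraph

section ChordedCycle

variable {n : ℕ} [NeZero n] {ι : Type*} (a : ι → Fin n)

def chordedCycle : SimpleGraph (Fin n) :=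
  fromEdgeSet ({e | ∃ i : Fin n, e = s(i, i + 1)} ∪ {e | ∃ i, e = s(0, a i)})

def chordCycle (b c : Fin n) : Finset (Sym2 (Fin n)) :=
  insert s(0, b) (insert s(0, c) (pathSegment b c))

variable {a}

lemma chordedCycle_pathGraph_adj {u v : Fin n} (hu : u ≠ 0) (hv : v ≠ 0)
    (h : (chordedCycle a).Adj u v) : (pathGraph n).Adj u v := by
  rw [chordedCycle, fromEdgeSet_adj] at h
  rcases h.1 with ⟨i, hi⟩ | ⟨i, hi⟩ <;> rw [Sym2.eq_iff] at hi
  · rw [pathGraph_adj]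
    rcases hi with ⟨rfl, rfl⟩ | ⟨rfl, rfl⟩
    · exact .inl (Fin.val_add_one_of_add_one_ne_zero hv).symm
    · exact .inr (Fin.val_add_one_of_add_one_ne_zero hu).symm
  · rcases hi with ⟨rfl, -⟩ | ⟨-, rfl⟩
    exacts [(hu rfl).elim, (hv rfl).elim]

lemma exists_eq_of_chordedCycle_adj_zero (h1 : ∃ i, (a i).val = 1)
    (hlast : ∃ i, (a i).val = n - 1) {v : Fin n} (h : (chordedCycle a).Adj 0 v) :
    ∃ i, v = a i := by
  have hv : v ≠ 0 := h.ne'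
  rw [chordedCycle, fromEdgeSet_adj] at h
  rcases h.1 with ⟨i, hi⟩ | ⟨i, hi⟩ <;> rw [Sym2.eq_iff] at hi
  · rcases hi with ⟨rfl, rfl⟩ | ⟨hi, rfl⟩
    · obtain ⟨j, hj⟩ := h1
      refine ⟨j, Fin.ext ?_⟩
      rw [Fin.val_add_one_of_add_one_ne_zero hv, hj, Fin.val_zero]
    · obtain ⟨j, hj⟩ := hlast
      refine ⟨j, Fin.ext ?_⟩
      have := Fin.add_one_eq_zero_iff.mp hi.symm
      omega
  · rcases hi with ⟨-, rfl⟩ | ⟨-, rfl⟩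
    exacts [⟨i, rfl⟩, (hv rfl).elim]

lemma chordedCycle_edges_mem_pathGraph {x y : Fin n} (p : (chordedCycle a).Walk x y)
    (h0 : (0 : Fin n) ∉ p.support) : ∀ e ∈ p.edges, e ∈ (pathGraph n).edgeSet := by
  intro e he
  induction e with
  | h u v =>
    exact chordedCycle_pathGraph_adj (fun hu => h0 (hu ▸ p.fst_mem_support_of_mem_edges he))
      (fun hv => h0 (hv ▸ p.snd_mem_support_of_mem_edges he)) (p.adj_of_mem_edges he)

lemma card_chordCycle {b c : Fin n} (hb : b ≠ 0) (hbc : b < c) :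
    #(chordCycle b c) = c - b + 2 := by
  have hseg : ∀ z, s(0, z) ∉ pathSegment b c := fun z he =>
    zero_notMem_of_mem_pathSegment hb he (Sym2.mem_mk_left _ _)
  have hne : s(0, b) ≠ s(0, c) := fun he => hbc.ne (Sym2.congr_right.mp he)
  rw [chordCycle, card_insert_of_notMem (by simp [hne, hseg]), card_insert_of_notMem (hseg c),
    card_pathSegment]

lemma exists_edges_toFinset_eq_chordCycle {u : Fin n} {w : (chordedCycle a).Walk u u}
    (hw : w.IsCycle) : ∃ b c, b < c ∧ (chordedCycle a).Adj 0 b ∧ (chordedCycle a).Adj 0 c ∧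
      w.edges.toFinset = chordCycle b c := by
  have h0 : (0 : Fin n) ∈ w.support := by
    by_contra h0
    exact pathGraph_isAcyclic n _ (hw.transfer (chordedCycle_edges_mem_pathGraph w h0))
  obtain ⟨b, hb, q, hq⟩ := Walk.not_nil_iff.mp (hw.rotate h0).not_nil
  have hcyc := hw.rotate h0
  rw [hq, Walk.cons_isCycle_iff] at hcyc
  obtain ⟨c, hc, r, hqr⟩ := Walk.exists_eq_cons_of_ne hb.ne q.reverse
  have hr := hcyc.1.reverse
  rw [hqr, Walk.cons_isPath_iff] at hr
  have hq_edges : q.edges.toFinset = insert s(0, c) r.edges.toFinset := by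
    rw [← List.toFinset_reverse, ← Walk.edges_reverse, hqr, Walk.edges_cons, List.toFinset_cons]
  have hedges : w.edges.toFinset = insert s(0, b) (insert s(0, c) r.edges.toFinset) := by
    rw [← List.toFinset_eq_of_perm _ _ (w.rotate_edges 0 h0).perm, hq, Walk.edges_cons,
      List.toFinset_cons, hq_edges]
  have hbc : b ≠ c := by
    rintro rfl
    exact hcyc.2 (List.mem_toFinset.mp (hq_edges ▸ mem_insert_self _ _))
  rw [← Walk.edges_transfer r (chordedCycle_edges_mem_pathGraph r hr.2),
    pathGraph_edges_toFinset_of_isPath (hr.1.transfer _)] at hedges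
  rcases hbc.lt_or_gt with hbc | hcb
  · refine ⟨b, c, hbc, hb, hc, ?_⟩
    rw [hedges, inf_eq_right.mpr hbc.le, sup_eq_left.mpr hbc.le, chordCycle]
  · refine ⟨c, b, hcb, hc, hb, ?_⟩
    rw [hedges, inf_eq_left.mpr hcb.le, sup_eq_right.mpr hcb.le, chordCycle, insert_comm]

end ChordedCycle

/-- If `a 0 < a 1 < ... < a (k-1)` are integers (in `{1, ..., n-1}`, with `a 0 = 1` and
`a (k-1) = n-1`) all of whose pairwise differences are distinct, then the graph on
`v_0, ..., v_{n-1}` consisting of the Hamilton cycle `v_0 v_1 ... v_{n-1} v_0` together with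
the chords `v_0 v_{a i}` has no two cycles of the same length. -/
theorem stmt0 (n k : ℕ) [NeZero n] (hk : 2 ≤ k)
    (a : Fin k → Fin n) (hmono : StrictMono a)
    (h1 : (a ⟨0, by omega⟩ : ℕ) = 1) (hlast : (a ⟨k - 1, by omega⟩ : ℕ) = n - 1)
    (hsidon : ∀ i j i' j' : Fin k, i < j → i' < j' →
      (a j : ℕ) - (a i : ℕ) = (a j' : ℕ) - (a i' : ℕ) → i = i' ∧ j = j')
    (G : SimpleGraph (Fin n))
    (hG : G = SimpleGraph.fromEdgeSet
      ({e | ∃ i : Fin n, e = s(i, i + 1)} ∪ {e | ∃ i : Fin k, e = s(0, a i)})) :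
    ∀ s t : Finset (Sym2 (Fin n)), IsCycleSet G s → IsCycleSet G t →
      s.card = t.card → s = t := by
  have hG : G = chordedCycle a := hG
  subst hG
  have hcycle : ∀ s, IsCycleSet (chordedCycle a) s →
      ∃ i j, i < j ∧ s = chordCycle (a i) (a j) ∧ #s = a j - a i + 2 := by
    rintro s ⟨u, w, hw, rfl⟩
    obtain ⟨b, c, hbc, hb, hc, hedges⟩ := exists_edges_toFinset_eq_chordCycle hw
    obtain ⟨i, rfl⟩ := exists_eq_of_chordedCycle_adj_zero ⟨_, h1⟩ ⟨_, hlast⟩ hb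
    obtain ⟨j, rfl⟩ := exists_eq_of_chordedCycle_adj_zero ⟨_, h1⟩ ⟨_, hlast⟩ hc
    exact ⟨i, j, hmono.lt_iff_lt.mp hbc, hedges, hedges ▸ card_chordCycle hb.ne' hbc⟩
  intro s t hs ht hst
  obtain ⟨i, j, hij, rfl, hs⟩ := hcycle s hs
  obtain ⟨i', j', hij', rfl, ht⟩ := hcycle t ht
  obtain ⟨rfl, rfl⟩ := hsidon i j i' j' hij hij' (by omega)
  rfl
end

section
/- If B ⊆ {1, ..., n} is a Sidon set (all pairwise sums a + b with a ≤ b in B are distinct), then |B| ≤ sqrt(n) + n^{1/4} + 1. -/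
lemma sum_distinct_pos (S : Finset ℕ) (h : ∀ x ∈ S, 1 ≤ x) :
    ∑ i ∈ Finset.range S.card, (i + 1) ≤ ∑ x ∈ S, x := by
  induction S using Finset.strongInduction with
  | _ S ih =>
    rcases S.eq_empty_or_nonempty with rfl | hne
    · simp
    · have hM := S.max'_mem hne
      have hcard : S.card ≤ S.max' hne := by
        have : S ⊆ Finset.Icc 1 (S.max' hne) := fun x hx =>
          Finset.mem_Icc.mpr ⟨h x hx, S.le_max' x hx⟩
        calc S.card ≤ (Finset.Icc 1 (S.max' hne)).card := Finset.card_le_card this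
          _ = S.max' hne := by rw [Nat.card_Icc]; omega
      have herase := ih (S.erase (S.max' hne)) (Finset.erase_ssubset hM)
        (fun x hx => h x (Finset.mem_of_mem_erase hx))
      have hc : (S.erase (S.max' hne)).card = S.card - 1 := Finset.card_erase_of_mem hM
      have hpos : 1 ≤ S.card := Finset.card_pos.mpr hne
      have hsum : ∑ x ∈ S, x = S.max' hne + ∑ x ∈ S.erase (S.max' hne), x :=
        (Finset.add_sum_erase S id hM).symm
      rw [hc] at herase
      have hsplit : ∑ i ∈ Finset.range S.card, (i + 1)
          = S.card + ∑ i ∈ Finset.range (S.card - 1), (i + 1) := by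
        obtain ⟨c, hc'⟩ : ∃ c, S.card = c + 1 := ⟨S.card - 1, by omega⟩
        rw [hc']
        simp [Finset.sum_range_succ]
        omega
      omega

lemma real_part (n k s m : ℕ) (hn : 1 ≤ n)
    (hsQ : ((n : ℝ) ^ ((1:ℝ)/4)) ≤ (s : ℝ))
    (hsQ' : (s : ℝ) ≤ (n : ℝ) ^ ((1:ℝ)/4) + 1)
    (hs : 1 ≤ s)
    (hA : (m : ℝ) * ((m : ℝ) + 1) ≤ ((n : ℝ) - 1) * ((s : ℝ) * ((s : ℝ) + 1)))
    (hB : 2 * (s : ℝ) * (k : ℝ) = 2 * (m : ℝ) + (s : ℝ) * ((s : ℝ) + 1)) :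
    (k : ℝ) ≤ Real.sqrt n + (n : ℝ) ^ ((1:ℝ)/4) + 1 := by
  set N : ℝ := (n : ℝ) with hN
  set Q : ℝ := N ^ ((1:ℝ)/4) with hQ
  set S : ℝ := (s : ℝ) with hS
  set M : ℝ := (m : ℝ) with hM
  set K : ℝ := (k : ℝ) with hK
  have hN1 : (1 : ℝ) ≤ N := by rw [hN]; exact_mod_cast hn
  have hN0 : (0 : ℝ) ≤ N := by linarith
  have hQpos : 0 < Q := Real.rpow_pos_of_pos (by linarith) _
  have hQsq : Q ^ 2 = Real.sqrt N := by
    rw [hQ, ← Real.rpow_natCast (N ^ ((1:ℝ)/4)) 2, ← Real.rpow_mul hN0,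
      Real.sqrt_eq_rpow]
    norm_num
  have hM0 : (0 : ℝ) ≤ M := by rw [hM]; positivity
  have hMle : M ≤ Real.sqrt ((N - 1) * (S * (S + 1))) := by
    have h1 : M ^ 2 ≤ (N - 1) * (S * (S + 1)) := by nlinarith
    calc M = Real.sqrt (M ^ 2) := (Real.sqrt_sq hM0).symm
      _ ≤ _ := Real.sqrt_le_sqrt h1
  have hS0 : (0 : ℝ) < S := by rw [hS]; exact_mod_cast hs
  have hsub : (0:ℝ) ≤ N - 1 := by linarith
  have h2 : Real.sqrt ((N - 1) * (S * (S + 1))) ≤ Real.sqrt (N - 1) * (S + 1/2) := by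
    have hy : (0:ℝ) ≤ Real.sqrt (N - 1) * (S + 1/2) := by positivity
    have hx : (N - 1) * (S * (S + 1)) ≤ (Real.sqrt (N - 1) * (S + 1/2)) ^ 2 := by
      rw [mul_pow, Real.sq_sqrt hsub]; nlinarith
    calc Real.sqrt ((N - 1) * (S * (S + 1))) ≤ Real.sqrt ((Real.sqrt (N - 1) * (S + 1/2)) ^ 2) :=
          Real.sqrt_le_sqrt hx
      _ = _ := Real.sqrt_sq hy
  have h3 : Real.sqrt (N - 1) ≤ Real.sqrt N := Real.sqrt_le_sqrt (by linarith)
  have hsn0 : 0 ≤ Real.sqrt N := Real.sqrt_nonneg _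
  have h1 : 2 * S * K ≤ 2 * Real.sqrt N * (S + 1/2) + S * (S + 1) := by
    have : M ≤ Real.sqrt N * (S + 1/2) := by
      calc M ≤ Real.sqrt (N - 1) * (S + 1/2) := hMle.trans h2
        _ ≤ Real.sqrt N * (S + 1/2) := by nlinarith
    nlinarith
  have hhint : (S - Q) * (1 - (S - Q)) ≥ 0 :=
    mul_nonneg (by linarith) (by linarith)
  have key : 2 * S * K ≤ 2 * S * (Real.sqrt N + Q + 1) := by nlinarith
  have := le_of_mul_le_mul_left (by linarith [key] : S * K ≤ S * (Real.sqrt N + Q + 1)) hS0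
  linarith

/-- Erdős–Turán: a Sidon set `B ⊆ {1, ..., n}` has size at most `√n + n^{1/4} + 1`. -/
theorem stmt3 (n : ℕ) (B : Finset ℕ) (hB : ∀ x ∈ B, x ∈ Finset.Icc 1 n)
    (hsidon : ∀ a ∈ B, ∀ b ∈ B, ∀ c ∈ B, ∀ d ∈ B,
      a ≤ b → c ≤ d → a + b = c + d → a = c ∧ b = d) :
    (B.card : ℝ) ≤ Real.sqrt n + (n : ℝ) ^ ((1 : ℝ) / 4) + 1 := by
  rcases Nat.eq_zero_or_pos n with rfl | hn
  · have hBe : B = ∅ :=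
      Finset.eq_empty_iff_forall_notMem.mpr (fun x hx => by simpa using hB x hx)
    rw [hBe]
    simp only [Finset.card_empty, Nat.cast_zero]
    positivity
  have hn0 : (0 : ℝ) < (n : ℝ) := by exact_mod_cast hn
  have hQpos : 0 < (n : ℝ) ^ ((1 : ℝ) / 4) := Real.rpow_pos_of_pos hn0 _
  set s : ℕ := ⌈(n : ℝ) ^ ((1 : ℝ) / 4)⌉₊ with hsdef
  have hs1 : 1 ≤ s := Nat.ceil_pos.mpr hQpos
  have hQs : ((n : ℝ) ^ ((1 : ℝ) / 4)) ≤ (s : ℝ) := Nat.le_ceil _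
  have hsQ' : (s : ℝ) ≤ (n : ℝ) ^ ((1 : ℝ) / 4) + 1 := (Nat.ceil_lt_add_one hQpos.le).le
  have hsqrt1 : (1 : ℝ) ≤ Real.sqrt n := by
    rw [show (1 : ℝ) = Real.sqrt 1 by simp]
    exact Real.sqrt_le_sqrt (by exact_mod_cast hn)
  by_cases hks' : B.card ≤ s
  · have : (B.card : ℝ) ≤ (s : ℝ) := Nat.cast_le.mpr hks'
    linarith
  push_neg at hks'
  have hks : s < B.card := hks'
  set k := B.card with hk
  have hk2 : 2 ≤ k := by omega
  -- the increasing enumeration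
  set b : ℕ → ℕ := fun i => if h : i < k then B.orderEmbOfFin hk.symm ⟨i, h⟩ else 0 with hbdef
  have hbmem : ∀ i, i < k → b i ∈ B := by
    intro i h
    simp only [hbdef, dif_pos h]
    exact B.orderEmbOfFin_mem hk.symm _
  have hbmono : ∀ i j, i < j → j < k → b i < b j := by
    intro i j hij hj
    have hi : i < k := lt_trans hij hj
    simp only [hbdef, dif_pos hi, dif_pos hj]
    exact (B.orderEmbOfFin hk.symm).strictMono (show (⟨i, hi⟩ : Fin k) < ⟨j, hj⟩ from hij)
  have hb1 : ∀ i, i < k → 1 ≤ b i ∧ b i ≤ n := fun i h => Finset.mem_Icc.mp (hB _ (hbmem i h))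
  have binj : ∀ i j, i < k → j < k → b i = b j → i = j := by
    intro i j hi hj hbij
    rcases lt_trichotomy i j with h | h | h
    · exact absurd hbij (Nat.ne_of_lt (hbmono i j h hj))
    · exact h
    · exact absurd hbij.symm (Nat.ne_of_lt (hbmono j i h hi))
  -- gaps and telescoping
  set g : ℕ → ℕ := fun j => b (j + 1) - b j with hgdef
  have htel : ∀ i d, i + d < k → ∑ t ∈ Finset.range d, g (i + t) = b (i + d) - b i := by
    intro i d
    induction d with
    | zero => simp
    | succ d ih =>
      intro h
      rw [Finset.sum_range_succ, ih (by omega)]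
      have h1 : b (i + d) < b (i + d + 1) := hbmono _ _ (by omega) (by omega)
      have h2 : b i ≤ b (i + d) := by
        rcases Nat.eq_zero_or_pos d with rfl | hd
        · simp
        · exact le_of_lt (hbmono i (i + d) (by omega) (by omega))
      simp only [hgdef]
      rw [show i + (d + 1) = i + d + 1 from rfl]
      omega
  -- the set of close index pairs
  set P : Finset (ℕ × ℕ) :=
    (Finset.Icc 1 s).biUnion (fun d => (Finset.range (k - d)).image (fun i => (i, i + d)))
    with hPdef
  have hdisj : ∀ d ∈ Finset.Icc 1 s, ∀ d' ∈ Finset.Icc 1 s, d ≠ d' →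
      Disjoint ((Finset.range (k - d)).image (fun i => (i, i + d)))
        ((Finset.range (k - d')).image (fun i => (i, i + d'))) := by
    intro d _ d' _ hdd'
    rw [Finset.disjoint_left]
    rintro p hp hp'
    obtain ⟨i, _, rfl⟩ := Finset.mem_image.mp hp
    obtain ⟨i', _, heq⟩ := Finset.mem_image.mp hp'
    rw [Prod.mk.injEq] at heq
    omega
  have hcard : P.card = ∑ d ∈ Finset.Icc 1 s, (k - d) := by
    rw [hPdef, Finset.card_biUnion hdisj]
    refine Finset.sum_congr rfl fun d _ => ?_
    rw [Finset.card_image_of_injective _ (fun i i' h => by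
      rw [Prod.mk.injEq] at h; exact h.1), Finset.card_range]
  set m := P.card with hm
  -- key counting identity
  have hident : m + (∑ d ∈ Finset.Icc 1 s, d) = s * k := by
    rw [hcard, ← Finset.sum_add_distrib]
    rw [Finset.sum_congr rfl (fun d hd => by
      rw [Finset.mem_Icc] at hd
      omega : ∀ d ∈ Finset.Icc 1 s, k - d + d = k)]
    rw [Finset.sum_const, Nat.card_Icc, smul_eq_mul]
    congr 1
  -- Sidon as unordered pairs
  have hpair : ∀ x ∈ B, ∀ y ∈ B, ∀ z ∈ B, ∀ w ∈ B,
      x + y = z + w → (x = z ∧ y = w) ∨ (x = w ∧ y = z) := by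
    intro x hx y hy z hz w hw hxy
    rcases le_total x y with h1 | h1 <;> rcases le_total z w with h2 | h2
    · exact Or.inl (hsidon x hx y hy z hz w hw h1 h2 hxy)
    · have := hsidon x hx y hy w hw z hz h1 h2 (by omega)
      exact Or.inr this
    · have := hsidon y hy x hx z hz w hw h1 h2 (by omega)
      exact Or.inr ⟨this.2, this.1⟩
    · have := hsidon y hy x hx w hw z hz h1 h2 (by omega)
      exact Or.inl ⟨this.2, this.1⟩
  -- membership description of P
  have hPmem : ∀ p ∈ P, ∃ d, 1 ≤ d ∧ d ≤ s ∧ ∃ i, i < k - d ∧ p = (i, i + d) := by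
    intro p hp
    rw [hPdef, Finset.mem_biUnion] at hp
    obtain ⟨d, hd, hp⟩ := hp
    rw [Finset.mem_Icc] at hd
    obtain ⟨i, hi, rfl⟩ := Finset.mem_image.mp hp
    exact ⟨d, hd.1, hd.2, i, Finset.mem_range.mp hi, rfl⟩
  -- the difference map is injective on P
  have hinj : Set.InjOn (fun p : ℕ × ℕ => b p.2 - b p.1) ↑P := by
    intro p hp q hq heq
    obtain ⟨d, hd1, hds, i, hi, rfl⟩ := hPmem p hp
    obtain ⟨d', hd1', hds', i', hi', rfl⟩ := hPmem q hq
    simp only at heq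
    have hik : i + d < k := by omega
    have hik' : i' + d' < k := by omega
    have h1 : b i < b (i + d) := hbmono _ _ (by omega) hik
    have h1' : b i' < b (i' + d') := hbmono _ _ (by omega) hik'
    have cross : b (i + d) + b i' = b (i' + d') + b i := by omega
    rcases hpair (b (i + d)) (hbmem _ hik) (b i') (hbmem _ (by omega))
        (b (i' + d')) (hbmem _ hik') (b i) (hbmem _ (by omega)) cross with
      ⟨e1, e2⟩ | ⟨e1, e2⟩
    · have hii : i = i' := binj _ _ (by omega) (by omega) e2.symm
      have := binj _ _ hik hik' e1
      simp only [Prod.mk.injEq]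
      omega
    · exact absurd e1 (Nat.ne_of_gt (by omega))
  -- lower bound for the sum of differences
  set f : ℕ × ℕ → ℕ := fun p => b p.2 - b p.1 with hfdef
  have hpos : ∀ p ∈ P, 1 ≤ f p := by
    intro p hp
    obtain ⟨d, hd1, hds, i, hi, rfl⟩ := hPmem p hp
    have := hbmono i (i + d) (by omega) (by omega)
    simp only [hfdef]
    omega
  have hcardD : (P.image f).card = m := Finset.card_image_of_injOn hinj
  have hlow : ∑ j ∈ Finset.range m, (j + 1) ≤ ∑ p ∈ P, f p := by
    have h1 := sum_distinct_pos (P.image f) (by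
      intro x hx
      obtain ⟨p, hp, rfl⟩ := Finset.mem_image.mp hx
      exact hpos p hp)
    rw [hcardD, Finset.sum_image hinj] at h1
    exact h1
  -- upper bound for the sum of differences
  have hup : ∑ p ∈ P, f p ≤ (∑ d ∈ Finset.Icc 1 s, d) * (n - 1) := by
    rw [hPdef, Finset.sum_biUnion (fun d hd d' hd' hne => hdisj d hd d' hd' hne)]
    refine le_trans (Finset.sum_le_sum (fun d hd => ?_)) (le_of_eq (Finset.sum_mul _ _ _).symm)
    rw [Finset.mem_Icc] at hd
    rw [Finset.sum_image (fun a _ a' _ h => by rw [Prod.mk.injEq] at h; exact h.1)]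
    have inner2 : ∀ t ∈ Finset.range d, ∑ i ∈ Finset.range (k - d), g (i + t) ≤ n - 1 := by
      intro t ht
      rw [Finset.mem_range] at ht
      have himg : ∑ i ∈ Finset.range (k - d), g (i + t)
          = ∑ j ∈ (Finset.range (k - d)).image (· + t), g j :=
        (Finset.sum_image (fun a _ a' _ h => by omega)).symm
      have hsub : (Finset.range (k - d)).image (· + t) ⊆ Finset.range (k - 1) := by
        intro j hj
        obtain ⟨i, hi, rfl⟩ := Finset.mem_image.mp hj
        rw [Finset.mem_range] at hi ⊢
        omega
      have htot : ∑ j ∈ Finset.range (k - 1), g j = b (k - 1) - b 0 := by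
        have := htel 0 (k - 1) (by omega)
        simpa using this
      have hle := Finset.sum_le_sum_of_subset hsub (f := g)
      have hb0 := hb1 0 (by omega)
      have hbk := hb1 (k - 1) (by omega)
      omega
    calc ∑ i ∈ Finset.range (k - d), f (i, i + d)
        = ∑ i ∈ Finset.range (k - d), ∑ t ∈ Finset.range d, g (i + t) := by
          refine Finset.sum_congr rfl fun i hi => ?_
          rw [Finset.mem_range] at hi
          rw [htel i d (by omega)]
      _ = ∑ t ∈ Finset.range d, ∑ i ∈ Finset.range (k - d), g (i + t) := Finset.sum_comm
      _ ≤ ∑ _t ∈ Finset.range d, (n - 1) := Finset.sum_le_sum inner2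
      _ = d * (n - 1) := by rw [Finset.sum_const, Finset.card_range, smul_eq_mul]
  -- Gauss sums
  have g1 : (∑ j ∈ Finset.range m, (j + 1)) * 2 = m * (m + 1) := by
    have h1 : ∑ j ∈ Finset.range (m + 1), j = ∑ j ∈ Finset.range m, (j + 1) := by
      rw [Finset.sum_range_succ']
      simp
    rw [← h1, Finset.sum_range_id_mul_two]
    simp [Nat.mul_comm]
  have g2 : (∑ d ∈ Finset.Icc 1 s, d) * 2 = s * (s + 1) := by
    have h0 : Finset.range (s + 1) = insert 0 (Finset.Icc 1 s) := by
      ext x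
      simp only [Finset.mem_range, Finset.mem_insert, Finset.mem_Icc]
      omega
    have h1 : ∑ d ∈ Finset.range (s + 1), d = ∑ d ∈ Finset.Icc 1 s, d := by
      rw [h0, Finset.sum_insert (by simp), zero_add]
    rw [← h1, Finset.sum_range_id_mul_two]
    simp [Nat.mul_comm]
  -- final natural-number inequalities
  have hNat1 : m * (m + 1) ≤ (n - 1) * (s * (s + 1)) := by
    calc m * (m + 1) = (∑ j ∈ Finset.range m, (j + 1)) * 2 := g1.symm
      _ ≤ ((∑ d ∈ Finset.Icc 1 s, d) * (n - 1)) * 2 :=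
          Nat.mul_le_mul_right 2 (hlow.trans hup)
      _ = (n - 1) * (s * (s + 1)) := by
          rw [Nat.mul_right_comm, g2]
          ring
  have hNat2 : 2 * (s * k) = 2 * m + s * (s + 1) := by omega
  -- cast to the reals and finish
  have hA' : (m : ℝ) * ((m : ℝ) + 1) ≤ ((n : ℝ) - 1) * ((s : ℝ) * ((s : ℝ) + 1)) := by
    have h := (Nat.cast_le (α := ℝ)).mpr hNat1
    push_cast [Nat.cast_sub hn] at h
    exact h
  have hB' : 2 * (s : ℝ) * (k : ℝ) = 2 * (m : ℝ) + (s : ℝ) * ((s : ℝ) + 1) := by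
    have h := congrArg (Nat.cast (R := ℝ)) hNat2
    push_cast at h
    linarith
  exact real_part n k s m hn hQs hsQ' hs1 hA' hB'
end

section
/- Let G be a 2-connected graph and let (G_0, G_1, ..., G_s) be an ear-decomposition of G, where G_0 is a cycle containing the edge uv, P_0 = G_0 − uv, and for each i ∈ [s], P_i is the G_{i-1}-ear with endpoints ℓ_i, r_i added at step i. Define L = P_0 ∪ (∪_{i∈[s]} P_i − r_i) and R = P_0 ∪ (∪_{i∈[s]} P_i − ℓ_i). Then L and R are spanning trees of G. -/
/-!
Call a subgraph a subtree when it is connected and acyclic. Gluing to a subtree `T` a path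
that starts in `T` and otherwise avoids `T` yields a subtree, since the path is added one
pendant edge at a time. An ear `P_i` with the vertex `r_i` removed is such a path, hanging off
`ℓ_i`; as `r_i` already lies in `G_{i-1}`, gluing it to a subtree with the vertices of
`G_{i-1}` gives one with the vertices of `G_i`. So by induction on the number of ears `L` is
a subtree with the vertices of `G_s = G`. `R` is the same construction for the reversed ears.
-/

open SimpleGraph

/-- `w` is an `H`-ear: a path in `G` whose endpoints lie in `H`, whose inner vertices do
not lie in `H`, and whose edges are not edges of `H`. -/
def IsEar {V : Type*} {G : SimpleGraph V} (H : G.Subgraph) {x y : V}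
    (w : G.Walk x y) : Prop :=
  w.IsPath ∧ x ∈ H.verts ∧ y ∈ H.verts ∧
    (∀ v ∈ w.support, v ≠ x → v ≠ y → v ∉ H.verts) ∧
    ∀ e ∈ w.edges, e ∉ H.edgeSet

lemma Fin.iSup_castSucc_sup_last {α : Type*} [CompleteLattice α] {n : ℕ}
    (f : Fin (n + 1) → α) :
    ⨆ i, f i = (⨆ i : Fin n, f i.castSucc) ⊔ f (Fin.last n) :=
  le_antisymm
    (iSup_le <| Fin.lastCases le_sup_right fun j =>
      le_sup_of_le_left (le_iSup (f ∘ Fin.castSucc) j))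
    (sup_le (iSup_le fun j => le_iSup f j.castSucc) (le_iSup f _))

lemma IsEar.reverse {V : Type*} {G : SimpleGraph V} {H : G.Subgraph} {x y : V}
    {w : G.Walk x y} (hw : IsEar H w) : IsEar H w.reverse := by
  obtain ⟨hpath, hx, hy, hin, hedges⟩ := hw
  refine ⟨hpath.reverse, hy, hx, fun z hz hzy hzx => hin z ?_ hzx hzy, fun e he => hedges e ?_⟩
  · simpa using hz
  · simpa using he

namespace SimpleGraph

variable {V : Type*} {G : SimpleGraph V}

namespace Subgraph

/-- Acyclicity is asked of `spanningCoe` rather than `coe`, so that edges can be added with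
`IsAcyclic.sup_edge_of_not_reachable`. -/
structure IsSubtree (T : G.Subgraph) : Prop where
  connected : T.Connected
  isAcyclic : T.spanningCoe.IsAcyclic

lemma isSubtree_singletonSubgraph (x : V) : (G.singletonSubgraph x).IsSubtree where
  connected := singletonSubgraph_connected
  isAcyclic := by
    have : (G.singletonSubgraph x).spanningCoe = ⊥ := by ext; simp
    exact this ▸ isAcyclic_bot

lemma IsSubtree.isTree_spanningCoe {T : G.Subgraph} (hT : T.IsSubtree)
    (hspan : T.verts = Set.univ) : T.spanningCoe.IsTree :=
  ⟨(T.spanningCoeEquivCoeOfSpanning (isSpanning_iff.mpr hspan)).connected_iff.mpr hT.connected,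
    hT.isAcyclic⟩

lemma IsSubtree.sup_subgraphOfAdj {T : G.Subgraph} (hT : T.IsSubtree) {a b : V}
    (ha : a ∈ T.verts) (hb : b ∉ T.verts) (hab : G.Adj a b) :
    (T ⊔ G.subgraphOfAdj hab).IsSubtree where
  connected := connected_sup hT.connected.preconnected (subgraphOfAdj_connected hab).preconnected
    ⟨a, ha, by simp⟩
  isAcyclic := by
    rw [sup_spanningCoe, spanningCoe_subgraphOfAdj]
    -- `b` is isolated in `T.spanningCoe`, so it cannot be reached from `a`.
    refine hT.isAcyclic.sup_edge_of_not_reachable fun ⟨p⟩ => hb ?_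
    exact T.edge_vert (p.adj_penultimate (Walk.not_nil_of_ne hab.ne)).symm

lemma verts_sup_deleteVerts_of_subset (H K : G.Subgraph) {s : Set V} (hs : s ⊆ H.verts) :
    (H ⊔ K.deleteVerts s).verts = H.verts ∪ K.verts := by
  ext x
  have := @hs x
  simp only [verts_sup, deleteVerts_verts, Set.mem_union, Set.mem_sdiff]
  tauto

lemma IsSubtree.sup_toSubgraph {T : G.Subgraph} (hT : T.IsSubtree) {a b : V} {q : G.Walk a b}
    (hq : q.IsPath) (ha : a ∈ T.verts) (hout : ∀ x ∈ q.support, x ≠ a → x ∉ T.verts) :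
    (T ⊔ q.toSubgraph).IsSubtree := by
  induction q generalizing T with
  | nil => rwa [Walk.toSubgraph, sup_of_le_left ((singletonSubgraph_le_iff _ _).mpr ha)]
  | @cons x y z h p ih =>
    have hx : x ∉ p.support := ((Walk.cons_isPath_iff h p).mp hq).2
    have hy : y ∉ T.verts := hout y (by simp) fun hyx => hx (hyx ▸ p.start_mem_support)
    rw [Walk.toSubgraph, ← sup_assoc]
    refine ih (hT.sup_subgraphOfAdj ha hy h) hq.of_cons (by simp) fun t ht hty => ?_
    have htx : t ≠ x := ne_of_mem_of_not_mem ht hx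
    simp [hout t (by simp [ht]) htx, htx, hty]

end Subgraph

lemma Walk.IsPath.isSubtree_toSubgraph {u v : V} {p : G.Walk u v} (hp : p.IsPath) :
    p.toSubgraph.IsSubtree := by
  have := (Subgraph.isSubtree_singletonSubgraph u).sup_toSubgraph hp rfl fun _ _ hx => hx
  rwa [sup_of_le_right ((singletonSubgraph_le_iff _ _).mpr p.start_mem_verts_toSubgraph)] at this

lemma Walk.deleteVerts_toSubgraph_cons_of_notMem {u v w : V} (h : G.Adj u v) (p : G.Walk v w)
    (hu : u ∉ p.support) : (Walk.cons h p).toSubgraph.deleteVerts {u} = p.toSubgraph := by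
  ext x y
  · rw [Subgraph.deleteVerts_verts, Set.mem_sdiff, Walk.mem_verts_toSubgraph,
      Walk.mem_verts_toSubgraph, Walk.support_cons, List.mem_cons, Set.mem_singleton_iff]
    exact ⟨fun h => h.1.resolve_left h.2, fun h => ⟨Or.inr h, ne_of_mem_of_not_mem h hu⟩⟩
  · simp only [Subgraph.deleteVerts_adj, Walk.toSubgraph, Subgraph.sup_adj, subgraphOfAdj_adj,
      Set.mem_singleton_iff]
    constructor
    · rintro ⟨-, hxu, -, hyu, hedge | hadj⟩
      · rcases Sym2.eq_iff.mp hedge with ⟨rfl, -⟩ | ⟨rfl, -⟩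
        · exact (hxu rfl).elim
        · exact (hyu rfl).elim
      · exact hadj
    · intro hadj
      exact ⟨Or.inr (p.toSubgraph.edge_vert hadj),
        ne_of_mem_of_not_mem (Walk.mem_support_of_adj_toSubgraph hadj) hu,
        Or.inr (p.toSubgraph.edge_vert hadj.symm),
        ne_of_mem_of_not_mem (Walk.mem_support_of_adj_toSubgraph hadj.symm) hu, Or.inr hadj⟩

namespace Subgraph

lemma IsSubtree.sup_deleteVerts_toSubgraph {T : G.Subgraph} (hT : T.IsSubtree) {a b : V}
    {q : G.Walk a b} (hq : q.IsPath) (hb : b ∈ T.verts)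
    (hin : ∀ x ∈ q.support, x ≠ a → x ≠ b → x ∉ T.verts) :
    (T ⊔ q.toSubgraph.deleteVerts {a}).IsSubtree := by
  cases q with
  | nil =>
    have : (G.singletonSubgraph a).deleteVerts {a} = ⊥ := by ext <;> simp
    rwa [Walk.toSubgraph, this, sup_bot_eq]
  | cons h p =>
    have ha : a ∉ p.support := ((Walk.cons_isPath_iff h p).mp hq).2
    rw [Walk.deleteVerts_toSubgraph_cons_of_notMem h p ha, ← p.toSubgraph_reverse]
    refine hT.sup_toSubgraph hq.of_cons.reverse hb fun x hx hxb => ?_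
    rw [Walk.support_reverse, List.mem_reverse] at hx
    exact hin x (by simp [hx]) (ne_of_mem_of_not_mem hx ha) hxb

theorem IsSubtree.sup_iSup_deleteVerts_ears {s : ℕ} {Gs : Fin (s + 1) → G.Subgraph}
    {a b : Fin s → V} (q : ∀ i, G.Walk (a i) (b i)) (hear : ∀ i, IsEar (Gs i.castSucc) (q i))
    (hstep : ∀ i, (Gs i.succ).verts = (Gs i.castSucc).verts ∪ (q i).toSubgraph.verts)
    {T : G.Subgraph} (hT : T.IsSubtree) (hT0 : T.verts = (Gs 0).verts) :
    (T ⊔ ⨆ i, (q i).toSubgraph.deleteVerts {a i}).IsSubtree ∧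
      (T ⊔ ⨆ i, (q i).toSubgraph.deleteVerts {a i}).verts = (Gs (Fin.last s)).verts := by
  induction s with
  | zero => simpa using ⟨hT, hT0⟩
  | succ s ih =>
    obtain ⟨hT', hT'v⟩ := ih (Gs := Gs ∘ Fin.castSucc) (fun i => q i.castSucc)
      (fun i => hear i.castSucc) (fun i => hstep i.castSucc) hT0
    obtain ⟨hpath, ha, hb, hin, -⟩ := hear (Fin.last s)
    rw [Fin.iSup_castSucc_sup_last, ← sup_assoc]
    refine ⟨hT'.sup_deleteVerts_toSubgraph hpath (hT'v ▸ hb) (hT'v ▸ hin), ?_⟩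
    rw [verts_sup_deleteVerts_of_subset _ _ (by simpa [hT'v] using ha), hT'v]
    exact (hstep (Fin.last s)).symm

end Subgraph

end SimpleGraph

theorem stmt14_general {V : Type*} (G : SimpleGraph V) {u v : V}
    (huv : G.Adj u v) (s : ℕ) (Gs : Fin (s + 1) → G.Subgraph)
    (p0 : G.Walk u v) (hp0 : p0.IsPath)
    (h0 : Gs 0 = p0.toSubgraph ⊔ G.subgraphOfAdj huv)
    (hlast : Gs (Fin.last s) = ⊤)
    (ℓ r : Fin s → V) (w : (i : Fin s) → G.Walk (ℓ i) (r i))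
    (hear : ∀ i : Fin s, IsEar (Gs i.castSucc) (w i))
    (hstep : ∀ i : Fin s, Gs i.succ = Gs i.castSucc ⊔ (w i).toSubgraph)
    (L R : G.Subgraph)
    (hL : L = p0.toSubgraph ⊔ ⨆ i : Fin s, ((w i).toSubgraph.deleteVerts {r i}))
    (hR : R = p0.toSubgraph ⊔ ⨆ i : Fin s, ((w i).toSubgraph.deleteVerts {ℓ i})) :
    (L.verts = Set.univ ∧ L.spanningCoe.IsTree) ∧
      (R.verts = Set.univ ∧ R.spanningCoe.IsTree) := by
  have hGs0 : p0.toSubgraph.verts = (Gs 0).verts := by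
    rw [h0, Subgraph.verts_sup, subgraphOfAdj_verts, eq_comm, Set.union_eq_left]
    simp [Set.insert_subset_iff]
  have hspan : (Gs (Fin.last s)).verts = Set.univ := by rw [hlast]; rfl
  obtain ⟨hLtree, hLverts⟩ := hp0.isSubtree_toSubgraph.sup_iSup_deleteVerts_ears
    (fun i => (w i).reverse) (fun i => (hear i).reverse)
    (fun i => by rw [hstep i, Walk.toSubgraph_reverse]; rfl) hGs0
  obtain ⟨hRtree, hRverts⟩ := hp0.isSubtree_toSubgraph.sup_iSup_deleteVerts_ears
    w hear (fun i => by rw [hstep i]; rfl) hGs0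
  simp only [Walk.toSubgraph_reverse, ← hL] at hLtree hLverts
  rw [← hR] at hRtree hRverts
  exact ⟨⟨hLverts.trans hspan, hLtree.isTree_spanningCoe (hLverts.trans hspan)⟩,
    ⟨hRverts.trans hspan, hRtree.isTree_spanningCoe (hRverts.trans hspan)⟩⟩

/-- Given an ear-decomposition of the 2-connected graph `G` where `G_0` is a cycle
consisting of the edge `uv` together with the `(u,v)`-path `P_0 = p0`, and where the `i`-th
ear `P_i = w i` has endpoints `ℓ i` and `r i`, the subgraphs
`L = P_0 ∪ (⋃ᵢ P_i − r_i)` and `R = P_0 ∪ (⋃ᵢ P_i − ℓ_i)` are spanning trees of `G`. -/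
theorem stmt14 {V : Type*} [Fintype V] (G : SimpleGraph V) {u v : V}
    (huv : G.Adj u v) (s : ℕ) (Gs : Fin (s + 1) → G.Subgraph)
    (p0 : G.Walk u v) (hp0 : p0.IsPath) (hp0e : s(u, v) ∉ p0.edges)
    (h0 : Gs 0 = p0.toSubgraph ⊔ G.subgraphOfAdj huv)
    (hlast : Gs (Fin.last s) = ⊤)
    (ℓ r : Fin s → V) (w : (i : Fin s) → G.Walk (ℓ i) (r i))
    (hear : ∀ i : Fin s, IsEar (Gs i.castSucc) (w i))
    (hstep : ∀ i : Fin s, Gs i.succ = Gs i.castSucc ⊔ (w i).toSubgraph)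
    (L R : G.Subgraph)
    (hL : L = p0.toSubgraph ⊔ ⨆ i : Fin s, ((w i).toSubgraph.deleteVerts {r i}))
    (hR : R = p0.toSubgraph ⊔ ⨆ i : Fin s, ((w i).toSubgraph.deleteVerts {ℓ i})) :
    (L.verts = Set.univ ∧ L.spanningCoe.IsTree) ∧
      (R.verts = Set.univ ∧ R.spanningCoe.IsTree) :=
  stmt14_general G huv s Gs p0 hp0 h0 hlast ℓ r w hear hstep L R hL hR
end
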